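/- For every plane binary tree t with n(t) ≥ 2 leaves, the number of root configurations c(t) equals the number of nonempty antichains of the partially ordered set whose elements are the internal nodes of t, ordered by u ≤ v if and only if v lies on the path from the root of t to u (the ancestor order). -/
import Mathlib

/-- Plane binary trees: a leaf, or an ordered pair of plane binary trees. -/
inductive PTree : Type where
  | leaf : PTree
  | node : PTree → PTree → PTree
deriving DecidableEq

namespace PTree

/-- Number of leaves of a plane binary tree. -/
def leaves : PTree → ℕ
  | leaf => 1
  | node l r => leaves l + leaves r

/-- Number of root ancestral configurations:
`c(leaf) = 0`, `c(node l r) = (c l + 1) * (c r + 1)`. -/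
def c : PTree → ℕ
  | leaf => 0
  | node l r => (c l + 1) * (c r + 1)

/-- The finite set of plane binary trees with `n` leaves. -/
def trees : ℕ → Finset PTree
  | 0 => ∅
  | 1 => {leaf}
  | (n+2) =>
      (Finset.Icc 1 (n+1)).attach.biUnion fun j =>
        ((trees j.1) ×ˢ (trees (n+2-j.1))).image fun p => node p.1 p.2
decreasing_by
  · have h := Finset.mem_Icc.mp j.2; omega
  · have h := Finset.mem_Icc.mp j.2; omega

end PTree

namespace PTree

/-- The set of internal nodes of a plane binary tree, encoded by their positions: the
root is `[]`, and a position `p` in the left (resp. right) root subtree is encoded by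
`false :: p` (resp. `true :: p`). -/
def internalPos : PTree → Finset (List Bool)
  | leaf => ∅
  | node l r =>
      insert [] (((internalPos l).image (List.cons false)) ∪
        ((internalPos r).image (List.cons true)))

end PTree

open PTree in
private lemma antichain_count (t : PTree) :
    (t.internalPos.powerset.filter
        (fun A => ∀ a ∈ A, ∀ b ∈ A, a ≠ b → ¬ a <+: b)).card = t.c + 1 := by
  induction t with
  | leaf =>
      simp [internalPos, c, Finset.filter_singleton]
  | node l r ihl ihr =>
      classical
      set S := ((node l r).internalPos.powerset.filter
        (fun A => ∀ a ∈ A, ∀ b ∈ A, a ≠ b → ¬ a <+: b)) with hS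
      -- split on whether [] ∈ A
      have hsplit := Finset.card_filter_add_card_filter_not
        (s := S) (p := fun A => ([] : List Bool) ∈ A)
      -- Part 1: antichains containing [] are exactly {[]}
      have h1 : S.filter (fun A => ([] : List Bool) ∈ A) = {({[]} : Finset (List Bool))} := by
        ext A
        simp only [Finset.mem_filter, Finset.mem_singleton, hS, Finset.mem_powerset]
        constructor
        · rintro ⟨⟨hsub, hanti⟩, hnil⟩
          apply Finset.eq_singleton_iff_unique_mem.mpr
          refine ⟨hnil, fun b hb => ?_⟩
          by_contra hne
          exact hanti [] hnil b hb (Ne.symm hne) List.nil_prefix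
        · rintro rfl
          refine ⟨⟨?_, ?_⟩, Finset.mem_singleton_self _⟩
          · intro x hx
            rw [Finset.mem_singleton] at hx
            subst hx
            exact Finset.mem_insert_self _ _
          · intro a ha b hb hne
            simp only [Finset.mem_singleton] at ha hb
            exact absurd (ha.trans hb.symm) hne
      -- Part 2: antichains not containing []
      have h2 : (S.filter (fun A => ([] : List Bool) ∉ A)).card =
          ((l.internalPos.powerset.filter (fun A => ∀ a ∈ A, ∀ b ∈ A, a ≠ b → ¬ a <+: b)) ×ˢ (r.internalPos.powerset.filter (fun A => ∀ a ∈ A, ∀ b ∈ A, a ≠ b → ¬ a <+: b))).card := by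
        apply Finset.card_bij'
          (i := fun A _ => (l.internalPos.filter (fun p => (false :: p) ∈ A),
                            r.internalPos.filter (fun p => (true :: p) ∈ A)))
          (j := fun B _ => B.1.image (List.cons false) ∪ B.2.image (List.cons true))
        · -- i maps into target
          intro A hA
          simp only [Finset.mem_filter, hS, Finset.mem_powerset] at hA
          obtain ⟨⟨hsub, hanti⟩, hnil⟩ := hA
          simp only [Finset.mem_product, Finset.mem_filter, Finset.mem_powerset]
          refine ⟨⟨Finset.filter_subset _ _, ?_⟩, Finset.filter_subset _ _, ?_⟩
          · intro a ha b hb hne hpre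
            exact hanti _ ha.2 _ hb.2 (fun h => hne (List.cons_injective h))
              ((List.cons_prefix_cons).mpr ⟨rfl, hpre⟩)
          · intro a ha b hb hne hpre
            exact hanti _ ha.2 _ hb.2 (fun h => hne (List.cons_injective h))
              ((List.cons_prefix_cons).mpr ⟨rfl, hpre⟩)
        · -- j maps into source
          intro B hB
          simp only [Finset.mem_product, Finset.mem_filter, Finset.mem_powerset] at hB
          obtain ⟨⟨hsub1, hanti1⟩, hsub2, hanti2⟩ := hB
          simp only [Finset.mem_filter, hS, Finset.mem_powerset]
          refine ⟨⟨?_, ?_⟩, ?_⟩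
          · intro x hx
            simp only [Finset.mem_union, Finset.mem_image] at hx
            simp only [internalPos, Finset.mem_insert, Finset.mem_union, Finset.mem_image]
            rcases hx with ⟨p, hp, rfl⟩ | ⟨p, hp, rfl⟩
            · exact Or.inr (Or.inl ⟨p, hsub1 hp, rfl⟩)
            · exact Or.inr (Or.inr ⟨p, hsub2 hp, rfl⟩)
          · intro a ha b hb hne hpre
            simp only [Finset.mem_union, Finset.mem_image] at ha hb
            rcases ha with ⟨p, hp, rfl⟩ | ⟨p, hp, rfl⟩ <;>
              rcases hb with ⟨q, hq, rfl⟩ | ⟨q, hq, rfl⟩ <;>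
              rw [List.cons_prefix_cons] at hpre
            · exact hanti1 p hp q hq (by simpa using hne) hpre.2
            · simp at hpre
            · simp at hpre
            · exact hanti2 p hp q hq (by simpa using hne) hpre.2
          · simp
        · -- left inverse : j (i A) = A
          intro A hA
          simp only [Finset.mem_filter, hS, Finset.mem_powerset] at hA
          obtain ⟨⟨hsub, hanti⟩, hnil⟩ := hA
          ext x
          simp only [Finset.mem_union, Finset.mem_image, Finset.mem_filter]
          constructor
          · rintro (⟨p, ⟨_, hp⟩, rfl⟩ | ⟨p, ⟨_, hp⟩, rfl⟩) <;> exact hp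
          · intro hx
            have := hsub hx
            simp only [internalPos, Finset.mem_insert, Finset.mem_union,
              Finset.mem_image] at this
            rcases this with rfl | ⟨p, hp, rfl⟩ | ⟨p, hp, rfl⟩
            · exact absurd hx hnil
            · exact Or.inl ⟨p, ⟨hp, hx⟩, rfl⟩
            · exact Or.inr ⟨p, ⟨hp, hx⟩, rfl⟩
        · -- right inverse : i (j B) = B
          intro B hB
          simp only [Finset.mem_product, Finset.mem_filter, Finset.mem_powerset] at hB
          obtain ⟨⟨hsub1, _⟩, hsub2, _⟩ := hB
          have e1 : l.internalPos.filter
              (fun p => (false :: p) ∈ B.1.image (List.cons false) ∪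
                B.2.image (List.cons true)) = B.1 := by
            ext p
            simp only [Finset.mem_filter, Finset.mem_union, Finset.mem_image]
            constructor
            · rintro ⟨_, ⟨q, hq, h⟩ | ⟨q, hq, h⟩⟩
              · cases h; exact hq
              · simp at h
            · intro hp
              exact ⟨hsub1 hp, Or.inl ⟨p, hp, rfl⟩⟩
          have e2 : r.internalPos.filter
              (fun p => (true :: p) ∈ B.1.image (List.cons false) ∪
                B.2.image (List.cons true)) = B.2 := by
            ext p
            simp only [Finset.mem_filter, Finset.mem_union, Finset.mem_image]
            constructor
            · rintro ⟨_, ⟨q, hq, h⟩ | ⟨q, hq, h⟩⟩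
              · simp at h
              · cases h; exact hq
            · intro hp
              exact ⟨hsub2 hp, Or.inr ⟨p, hp, rfl⟩⟩
          simp only [e1, e2]
      rw [Finset.card_product, ihl, ihr] at h2
      have := hsplit
      rw [h1, Finset.card_singleton] at this
      have hc : (node l r).c = (l.c + 1) * (r.c + 1) := rfl
      omega

set_option linter.unusedVariables false in
/-- For a plane binary tree `t` with at least two leaves, the number of root
configurations `c t` equals the number of nonempty antichains of the poset of internal
nodes of `t` under the ancestor order (`u ≤ v` iff `v` lies on the path from the root to
`u`, i.e. iff the position of `v` is a prefix of the position of `u`). -/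
theorem c_eq_card_nonempty_antichains (t : PTree) (ht : 2 ≤ t.leaves) :
    ((t.internalPos.powerset.filter
        (fun A => A.Nonempty ∧ ∀ a ∈ A, ∀ b ∈ A, a ≠ b → ¬ a <+: b)).card) = t.c := by
  classical
  have key := antichain_count t
  have hsub : (t.internalPos.powerset.filter
      (fun A => A.Nonempty ∧ ∀ a ∈ A, ∀ b ∈ A, a ≠ b → ¬ a <+: b)) =
      (t.internalPos.powerset.filter
        (fun A => ∀ a ∈ A, ∀ b ∈ A, a ≠ b → ¬ a <+: b)).erase ∅ := by
    ext A
    simp only [Finset.mem_filter, Finset.mem_erase, Finset.mem_powerset]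
    constructor
    · rintro ⟨hsub, hne, hanti⟩
      exact ⟨hne.ne_empty, hsub, hanti⟩
    · rintro ⟨hne, hsub, hanti⟩
      exact ⟨hsub, Finset.nonempty_iff_ne_empty.mpr hne, hanti⟩
  have hmem : (∅ : Finset (List Bool)) ∈ t.internalPos.powerset.filter
      (fun A => ∀ a ∈ A, ∀ b ∈ A, a ≠ b → ¬ a <+: b) := by
    simp
  rw [hsub, Finset.card_erase_of_mem hmem, key]
  simp
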